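/- After adding the cut z ≤ 14 to Q_n (yielding the problem Q'_n), the projection of the feasible set of the LP relaxation of Q'_n onto (x_1, y_1, …, x_n, y_n) equals the product (P')^n, where P' = {(x,y) ∈ P | 13x + 10y ≤ 14}; the optimal value of this LP relaxation is 6.75n, and the unique optimal solution is (x_i, y_i) = (0.5, 0.75) for all i together with z = 14. -/
import Mathlib


/-- The polytope `P = {(x,y) ∈ [0,1]² | -7x + y ≤ 0.3, 5x + 8y ≤ 8.5, 3x + 2y ≤ 3.7}`. -/
def P : Set (ℝ × ℝ) :=
  {p | 0 ≤ p.1 ∧ p.1 ≤ 1 ∧ 0 ≤ p.2 ∧ p.2 ≤ 1 ∧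
    -7 * p.1 + p.2 ≤ 0.3 ∧ 5 * p.1 + 8 * p.2 ≤ 8.5 ∧ 3 * p.1 + 2 * p.2 ≤ 3.7}

/-- The polytope `P' = {(x,y) ∈ P | 13x + 10y ≤ 14}`. -/
def P' : Set (ℝ × ℝ) := {p ∈ P | 13 * p.1 + 10 * p.2 ≤ 14}

/-- Feasibility for the LP relaxation of `Q'_n` (with the added cut `z ≤ 14`):
`(xᵢ, yᵢ) ∈ P` for all `i`, `13xᵢ + 10yᵢ ≤ z` for all `i`, and `z ≤ 14`. -/
def Q'nLPFeas (n : ℕ) (xy : Fin n → ℝ × ℝ) (z : ℝ) : Prop :=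
  (∀ i, xy i ∈ P ∧ 13 * (xy i).1 + 10 * (xy i).2 ≤ z) ∧ z ≤ 14

/-- The objective of `Q'_n`: `6 ∑ xᵢ + 5 ∑ yᵢ`. -/
noncomputable def QnObj (n : ℕ) (xy : Fin n → ℝ × ℝ) : ℝ :=
  6 * ∑ i, (xy i).1 + 5 * ∑ i, (xy i).2

lemma key_le (x y : ℝ) (h1 : 5 * x + 8 * y ≤ 8.5) (h2 : 13 * x + 10 * y ≤ 14) :
    6 * x + 5 * y ≤ 6.75 := by linarith

lemma obj_eq_sum (n : ℕ) (xy : Fin n → ℝ × ℝ) :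
    QnObj n xy = ∑ i, (6 * (xy i).1 + 5 * (xy i).2) := by
  simp [QnObj, Finset.sum_add_distrib, Finset.mul_sum]

lemma feas_bound (n : ℕ) (xy : Fin n → ℝ × ℝ) (z : ℝ) (h : Q'nLPFeas n xy z) :
    QnObj n xy ≤ 6.75 * n := by
  rw [obj_eq_sum]
  calc ∑ i, (6 * (xy i).1 + 5 * (xy i).2) ≤ ∑ _i : Fin n, (6.75 : ℝ) := by
        apply Finset.sum_le_sum
        intro i _
        exact key_le _ _ ((h.1 i).1.2.2.2.2.2.1 : _) (le_trans (h.1 i).2 h.2)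
      _ = 6.75 * n := by simp [mul_comm]

/-- The projection of the feasible set of the LP relaxation of `Q'_n` onto the `(xᵢ, yᵢ)`
variables equals `(P')ⁿ`; its optimal value is `6.75n`, attained uniquely at
`(xᵢ, yᵢ) = (0.5, 0.75)` for all `i` together with `z = 14`. -/
theorem Q'n_LP_relaxation (n : ℕ) (hn : 1 ≤ n) :
    {xy : Fin n → ℝ × ℝ | ∃ z : ℝ, Q'nLPFeas n xy z} =
      {xy : Fin n → ℝ × ℝ | ∀ i, xy i ∈ P'} ∧
    Q'nLPFeas n (fun _ => ((0.5 : ℝ), (0.75 : ℝ))) 14 ∧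
    QnObj n (fun _ => ((0.5 : ℝ), (0.75 : ℝ))) = 6.75 * n ∧
    (∀ (xy : Fin n → ℝ × ℝ) (z : ℝ), Q'nLPFeas n xy z → QnObj n xy ≤ 6.75 * n) ∧
    (∀ (xy : Fin n → ℝ × ℝ) (z : ℝ), Q'nLPFeas n xy z → QnObj n xy = 6.75 * n →
      xy = (fun _ => ((0.5 : ℝ), (0.75 : ℝ))) ∧ z = 14) := by
  refine ⟨?_, ?_, ?_, feas_bound n, ?_⟩
  · ext xy
    simp only [Set.mem_setOf_eq, Q'nLPFeas, P', Set.mem_setOf_eq]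
    constructor
    · rintro ⟨z, h, hz⟩ i
      exact ⟨(h i).1, le_trans (h i).2 hz⟩
    · intro h
      exact ⟨14, fun i => ⟨(h i).1, (h i).2⟩, le_refl _⟩
  · refine ⟨fun i => ⟨?_, ?_⟩, le_refl _⟩ <;> norm_num [P]
  · rw [obj_eq_sum]
    norm_num [mul_comm]
  · intro xy z h heq
    have hle : ∀ i, 6 * (xy i).1 + 5 * (xy i).2 ≤ 6.75 := fun i =>
      key_le _ _ ((h.1 i).1.2.2.2.2.2.1 : _) (le_trans (h.1 i).2 h.2)
    have hall : ∀ i, 6 * (xy i).1 + 5 * (xy i).2 = 6.75 := by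
      by_contra hc
      push_neg at hc
      obtain ⟨j, hj⟩ := hc
      have hlt : ∑ i, (6 * (xy i).1 + 5 * (xy i).2) < ∑ _i : Fin n, (6.75 : ℝ) :=
        Finset.sum_lt_sum (fun i _ => hle i)
          ⟨j, Finset.mem_univ j, lt_of_le_of_ne (hle j) hj⟩
      rw [← obj_eq_sum, heq] at hlt
      simp [mul_comm] at hlt
    have hpt : ∀ i, xy i = ((0.5 : ℝ), (0.75 : ℝ)) := by
      intro i
      have h1 : 5 * (xy i).1 + 8 * (xy i).2 ≤ 8.5 := (h.1 i).1.2.2.2.2.2.1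
      have h2 : 13 * (xy i).1 + 10 * (xy i).2 ≤ 14 := le_trans (h.1 i).2 h.2
      have h3 := hall i
      have hx : (xy i).1 = 0.5 := by linarith
      have hy : (xy i).2 = 0.75 := by linarith
      exact Prod.ext hx hy
    refine ⟨funext hpt, ?_⟩
    have hi := (h.1 ⟨0, hn⟩).2
    rw [hpt ⟨0, hn⟩] at hi
    norm_num at hi
    linarith [h.2]
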